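/- Let A ⊆ ℝⁿ be a nonempty closed set, x ∈ A with int T_A(x) ≠ ∅, z ∈ ℝ, M > 0, and let ℓ : ℝⁿ → ℝ be any function. Then the set {(u, ℓ(u)) : u ∈ M𝔹} ⊆ ℝⁿ⁺¹ meets the interior of the Clarke tangent cone to A × ℝ at (x,z): {(u, ℓ(u)) : u ∈ M𝔹} ∩ int T_{A×ℝ}((x,z)) ≠ ∅. -/
import Mathlib


open Set Filter Topology Metric Pointwise

noncomputable section

variable {E : Type*} [NormedAddCommGroup E] [NormedSpace ℝ E]

/-- The Clarke tangent cone to `A` at `x`. -/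
def clarkeTangentCone (A : Set E) (x : E) : Set E :=
  {ξ | ∀ (xs : ℕ → E) (ts : ℕ → ℝ), (∀ i, xs i ∈ A) → Tendsto xs atTop (𝓝 x) →
      (∀ i, 0 < ts i) → Tendsto ts atTop (𝓝 0) →
      ∃ as : ℕ → E, (∀ i, as i ∈ A) ∧
        Tendsto (fun i => (ts i)⁻¹ • (as i - xs i)) atTop (𝓝 ξ)}

theorem smul_mem_clarkeTangentCone {A : Set E} {x : E} {ξ : E} {t : ℝ} (ht : 0 < t)
    (hξ : ξ ∈ clarkeTangentCone A x) : t • ξ ∈ clarkeTangentCone A x := by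
  intro xs ts hmem hxs hts hts0
  obtain ⟨as, hasmem, hastend⟩ := hξ xs (fun i => t * ts i) hmem hxs
    (fun i => mul_pos ht (hts i)) (by simpa using hts0.const_mul t)
  refine ⟨as, hasmem, ?_⟩
  have := hastend.const_smul t
  convert this using 2 with i
  rw [smul_smul, mul_inv, ← mul_assoc, mul_inv_cancel₀ ht.ne', one_mul]

theorem prod_mem_clarkeTangentCone {A : Set E} {x : E} {ξ : E} {z η : ℝ}
    (hξ : ξ ∈ clarkeTangentCone A x) :
    (ξ, η) ∈ clarkeTangentCone (A ×ˢ (univ : Set ℝ)) (x, z) := by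
  intro ps ts hmem hps hts hts0
  obtain ⟨as, hasmem, hastend⟩ := hξ (fun i => (ps i).1) ts (fun i => (hmem i).1)
    ((continuous_fst.tendsto _).comp hps) hts hts0
  refine ⟨fun i => (as i, (ps i).2 + ts i * η), fun i => ⟨hasmem i, mem_univ _⟩, ?_⟩
  have h2 : Tendsto (fun i => (ts i)⁻¹ * ((ps i).2 + ts i * η - (ps i).2)) atTop (𝓝 η) := by
    have : ∀ i, (ts i)⁻¹ * ((ps i).2 + ts i * η - (ps i).2) = η := fun i => by
      rw [add_sub_cancel_left, inv_mul_cancel_left₀ (hts i).ne']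
    rw [show (fun i => (ts i)⁻¹ * ((ps i).2 + ts i * η - (ps i).2)) = fun _ => η from
      funext this]
    exact tendsto_const_nhds
  exact hastend.prodMk_nhds h2

/-- Let `A ⊆ ℝⁿ` be nonempty and closed, `x ∈ A` with `int T_A(x) ≠ ∅`, `z ∈ ℝ`,
`M > 0` and `ℓ : ℝⁿ → ℝ` any function. Then the set `{(u, ℓ(u)) : u ∈ M𝔹}` meets
the interior of the Clarke tangent cone to `A × ℝ` at `(x,z)`. -/
theorem velocitySet_inter_interior_clarkeTangentCone_nonempty
    {n : ℕ} (A : Set (EuclideanSpace ℝ (Fin n))) (hA : IsClosed A) (hAne : A.Nonempty)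
    (x : EuclideanSpace ℝ (Fin n)) (hx : x ∈ A)
    (hint : (interior (clarkeTangentCone A x)).Nonempty)
    (z : ℝ) (M : ℝ) (hM : 0 < M) (ℓ : EuclideanSpace ℝ (Fin n) → ℝ) :
    ((fun u => (u, ℓ u)) '' closedBall (0 : EuclideanSpace ℝ (Fin n)) M ∩
      interior (clarkeTangentCone (A ×ˢ (univ : Set ℝ)) (x, z))).Nonempty := by
  obtain ⟨ξ, hξ⟩ := hint
  -- interior of the cone is closed under positive scaling
  have hscale : ∀ t : ℝ, 0 < t → t • ξ ∈ interior (clarkeTangentCone A x) := by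
    intro t ht
    have hopen : IsOpen (t • interior (clarkeTangentCone A x)) :=
      isOpen_interior.smul₀ ht.ne'
    have hsub : t • interior (clarkeTangentCone A x) ⊆ clarkeTangentCone A x := by
      rintro _ ⟨y, hy, rfl⟩
      exact smul_mem_clarkeTangentCone ht (interior_subset hy)
    exact interior_maximal hsub hopen (smul_mem_smul_set hξ)
  -- the interior of the product cone contains interior T_A(x) ×ˢ univ
  have hprodsub : interior (clarkeTangentCone A x) ×ˢ (univ : Set ℝ) ⊆
      interior (clarkeTangentCone (A ×ˢ (univ : Set ℝ)) (x, z)) := by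
    refine interior_maximal ?_ (isOpen_interior.prod isOpen_univ)
    rintro ⟨ξ', η⟩ ⟨hξ', -⟩
    exact prod_mem_clarkeTangentCone (interior_subset hξ')
  by_cases h0 : ξ = 0
  · refine ⟨(0, ℓ 0), ⟨0, mem_closedBall_self hM.le, rfl⟩, hprodsub ⟨?_, mem_univ _⟩⟩
    simpa [h0] using hξ
  · set u := (M / ‖ξ‖) • ξ with hu
    have hnorm : ‖ξ‖ > 0 := norm_pos_iff.mpr h0
    have hub : u ∈ closedBall (0 : EuclideanSpace ℝ (Fin n)) M := by
      rw [mem_closedBall_zero_iff, hu, norm_smul]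
      rw [Real.norm_eq_abs, abs_of_pos (div_pos hM hnorm), div_mul_cancel₀ _ hnorm.ne']
    refine ⟨(u, ℓ u), ⟨u, hub, rfl⟩, hprodsub ⟨?_, mem_univ _⟩⟩
    exact hscale _ (div_pos hM hnorm)
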